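/- Let u : ℝ² → ℝ be smooth. For (x,t) ∈ ℝ² and k ∈ ℂ \ {0} define the 2×2 complex matrices L(k) = −ik·diag(1,−1), Z(k) = −4ik³·diag(1,−1), 𝒰(x,t,k) = (u/(2k))·[[i,−1],[−1,−i]], and 𝒱(x,t,k) = −2ku·[[0,1],[1,0]] + u_x·[[0,−i],[i,0]] + ((2u² − u_xx)/(2k))·[[i,−1],[−1,−i]], where u, u_x, u_xx are evaluated at (x,t). Then u satisfies the KdV equation u_t + u_xxx − 6uu_x = 0 on ℝ² if and only if the zero-curvature equation ∂_t 𝒰 − ∂_x 𝒱 + [L(k) + 𝒰, Z(k) + 𝒱] = 0 holds for all (x,t) ∈ ℝ² and all k ∈ ℂ \ {0}, where [A,B] = AB − BA. -/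

import Mathlib

/-- Partial derivative in the first (spatial) variable. -/
noncomputable def pdx {E : Type*} [NormedAddCommGroup E] [NormedSpace ℝ E]
    (f : ℝ × ℝ → E) : ℝ × ℝ → E := fun p => fderiv ℝ f p (1, 0)

/-- Partial derivative in the second (time) variable. -/
noncomputable def pdt {E : Type*} [NormedAddCommGroup E] [NormedSpace ℝ E]
    (f : ℝ × ℝ → E) : ℝ × ℝ → E := fun p => fderiv ℝ f p (0, 1)

/-- The Pauli matrix σ₃ = diag(1,−1). -/
noncomputable def σ₃ : Matrix (Fin 2) (Fin 2) ℂ := !![1, 0; 0, -1]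

/-- L(k) = −ik σ₃. -/
noncomputable def Lmat (k : ℂ) : Matrix (Fin 2) (Fin 2) ℂ := (-Complex.I * k) • σ₃

/-- Z(k) = −4ik³ σ₃. -/
noncomputable def Zmat (k : ℂ) : Matrix (Fin 2) (Fin 2) ℂ := (-4 * Complex.I * k ^ 3) • σ₃

/-- The matrix 𝒰 of the KdV Lax pair. -/
noncomputable def Umat (u : ℝ × ℝ → ℝ) (k : ℂ) (p : ℝ × ℝ) : Matrix (Fin 2) (Fin 2) ℂ :=
  (((u p : ℝ) : ℂ) / (2 * k)) • !![Complex.I, -1; -1, -Complex.I]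

/-- The matrix 𝒱 of the KdV Lax pair. -/
noncomputable def Vmat (u : ℝ × ℝ → ℝ) (k : ℂ) (p : ℝ × ℝ) : Matrix (Fin 2) (Fin 2) ℂ :=
  (-2 * k * ((u p : ℝ) : ℂ)) • !![0, 1; 1, 0]
  + ((pdx u p : ℝ) : ℂ) • !![0, -Complex.I; Complex.I, 0]
  + ((2 * ((u p : ℝ) : ℂ) ^ 2 - ((pdx (pdx u) p : ℝ) : ℂ)) / (2 * k)) •
      !![Complex.I, -1; -1, -Complex.I]

/-- Entrywise time derivative of a matrix-valued function. -/
noncomputable def matPdt (F : ℝ × ℝ → Matrix (Fin 2) (Fin 2) ℂ) (p : ℝ × ℝ) :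
    Matrix (Fin 2) (Fin 2) ℂ :=
  Matrix.of fun i j => pdt (fun p' => F p' i j) p

/-- Entrywise spatial derivative of a matrix-valued function. -/
noncomputable def matPdx (F : ℝ × ℝ → Matrix (Fin 2) (Fin 2) ℂ) (p : ℝ × ℝ) :
    Matrix (Fin 2) (Fin 2) ℂ :=
  Matrix.of fun i j => pdx (fun p' => F p' i j) p

open Complex Matrix

set_option maxHeartbeats 1000000 in
private lemma zc_key (a b c d e k : ℂ) (hk : k ≠ 0) :
    (e/(2*k)) • !![I,-1;-1,-I]
    - ((-2*k*b) • !![(0:ℂ),1;1,0] + c • !![(0:ℂ),-I;I,0] + ((4*a*b-d)/(2*k)) • !![I,-1;-1,-I])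
    + (((-Complex.I * k) • !![(1:ℂ),0;0,-1] + (a/(2*k)) • !![I,-1;-1,-I])
        * ((-4 * Complex.I * k ^ 3) • !![(1:ℂ),0;0,-1]
          + ((-2*k*a) • !![(0:ℂ),1;1,0] + b • !![(0:ℂ),-I;I,0] + ((2*a^2-c)/(2*k)) • !![I,-1;-1,-I]))
      - ((-4 * Complex.I * k ^ 3) • !![(1:ℂ),0;0,-1]
          + ((-2*k*a) • !![(0:ℂ),1;1,0] + b • !![(0:ℂ),-I;I,0] + ((2*a^2-c)/(2*k)) • !![I,-1;-1,-I]))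
        * ((-Complex.I * k) • !![(1:ℂ),0;0,-1] + (a/(2*k)) • !![I,-1;-1,-I]))
    = ((e + d - 6*a*b)/(2*k)) • !![I,-1;-1,-I] := by
  ext i j
  fin_cases i <;> fin_cases j <;>
  · simp only [Matrix.sub_apply, Matrix.add_apply, Matrix.smul_apply, Matrix.mul_apply,
      Fin.sum_univ_two, Matrix.cons_val', Matrix.cons_val_zero, Matrix.cons_val_one,
      Matrix.head_cons, Matrix.empty_val', Matrix.cons_val_fin_one, Matrix.head_fin_const,
      smul_eq_mul, Fin.isValue, Matrix.of_apply, Fin.zero_eta, Fin.mk_one]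
    field_simp
    ring_nf
    all_goals simp only [Complex.I_sq, inv_pow]
    all_goals field_simp
    all_goals ring

private lemma fderiv_ofReal_mul {f : ℝ × ℝ → ℝ} {p : ℝ × ℝ}
    (hf : DifferentiableAt ℝ f p) (c : ℂ) (v : ℝ × ℝ) :
    fderiv ℝ (fun q => ((f q : ℝ) : ℂ) * c) p v = ((fderiv ℝ f p v : ℝ) : ℂ) * c := by
  have h : (fun q => ((f q : ℝ) : ℂ) * c) = fun q => f q • c := by
    ext q; simp [Complex.real_smul]
  rw [h, fderiv_smul_const hf]
  simp [Complex.real_smul]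

private lemma fderiv_entry3 {f g h : ℝ × ℝ → ℝ} {p : ℝ × ℝ}
    (hf : DifferentiableAt ℝ f p) (hg : DifferentiableAt ℝ g p)
    (hh : DifferentiableAt ℝ h p) (c₁ c₂ c₃ : ℂ) (v : ℝ × ℝ) :
    fderiv ℝ (fun q => ((f q : ℝ) : ℂ) * c₁ + ((g q : ℝ) : ℂ) * c₂ + ((h q : ℝ) : ℂ) * c₃) p v
      = ((fderiv ℝ f p v : ℝ) : ℂ) * c₁ + ((fderiv ℝ g p v : ℝ) : ℂ) * c₂
        + ((fderiv ℝ h p v : ℝ) : ℂ) * c₃ := by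
  have e1 : (fun q => ((f q : ℝ) : ℂ) * c₁ + ((g q : ℝ) : ℂ) * c₂ + ((h q : ℝ) : ℂ) * c₃)
      = fun q => (f q • c₁ + g q • c₂) + h q • c₃ := by
    ext q; simp [Complex.real_smul]
  have d1 : DifferentiableAt ℝ (fun q => f q • c₁) p := hf.smul_const c₁
  have d2 : DifferentiableAt ℝ (fun q => g q • c₂) p := hg.smul_const c₂
  have d3 : DifferentiableAt ℝ (fun q => h q • c₃) p := hh.smul_const c₃
  rw [e1, fderiv_fun_add (f := fun q => f q • c₁ + g q • c₂) (d1.add d2) d3, fderiv_fun_add d1 d2,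
    fderiv_smul_const hf, fderiv_smul_const hg, fderiv_smul_const hh]
  simp [Complex.real_smul]

private lemma pdx_def {E : Type*} [NormedAddCommGroup E] [NormedSpace ℝ E]
    (f : ℝ × ℝ → E) (p : ℝ × ℝ) : pdx f p = fderiv ℝ f p (1, 0) := rfl

private lemma contDiff_pdx {f : ℝ × ℝ → ℝ} (hf : ContDiff ℝ (⊤ : ℕ∞) f) : ContDiff ℝ (⊤ : ℕ∞) (pdx f) :=
  (ContinuousLinearMap.apply ℝ ℝ ((1:ℝ),(0:ℝ))).contDiff.comp (hf.fderiv_right (m := (⊤ : ℕ∞)) (by simp))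

open Complex in
private lemma matPdt_Umat (u : ℝ × ℝ → ℝ) (hu : ContDiff ℝ (⊤ : ℕ∞) u) (k : ℂ) (p : ℝ × ℝ) :
    matPdt (fun p' => Umat u k p') p
      = (((pdt u p : ℝ) : ℂ) / (2*k)) • !![I,-1;-1,-I] := by
  ext i j
  show pdt (fun p' => Umat u k p' i j) p = _
  have e1 : (fun p' => Umat u k p' i j)
      = fun p' => ((u p' : ℝ) : ℂ) * ((!![I,-1;-1,-I] : Matrix (Fin 2) (Fin 2) ℂ) i j / (2*k)) := by
    ext p'; simp only [Umat, Matrix.smul_apply, smul_eq_mul]; ring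
  rw [e1]
  unfold pdt
  rw [fderiv_ofReal_mul (hu.differentiable (by simp) p) _ _]
  simp only [Matrix.smul_apply, smul_eq_mul]
  ring

open Complex in
private lemma matPdx_Vmat (u : ℝ × ℝ → ℝ) (hu : ContDiff ℝ (⊤ : ℕ∞) u) (k : ℂ) (p : ℝ × ℝ) :
    matPdx (fun p' => Vmat u k p') p
      = (-2*k*((pdx u p : ℝ) : ℂ)) • !![(0:ℂ),1;1,0]
        + ((pdx (pdx u) p : ℝ) : ℂ) • !![(0:ℂ),-I;I,0]
        + ((4*((u p : ℝ) : ℂ)*((pdx u p : ℝ) : ℂ) - ((pdx (pdx (pdx u)) p : ℝ) : ℂ))/(2*k)) •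
            !![I,-1;-1,-I] := by
  have du : Differentiable ℝ u := hu.differentiable (by simp)
  have du1 : Differentiable ℝ (pdx u) := (contDiff_pdx hu).differentiable (by simp)
  have du2 : Differentiable ℝ (pdx (pdx u)) := (contDiff_pdx (contDiff_pdx hu)).differentiable (by simp)
  have dh : Differentiable ℝ (fun q => 2*(u q)^2 - pdx (pdx u) q) :=
    (((du.pow 2).const_mul 2).sub du2)
  have hder : fderiv ℝ (fun q => 2*(u q)^2 - pdx (pdx u) q) p ((1:ℝ),(0:ℝ))
      = 4 * u p * pdx u p - pdx (pdx (pdx u)) p := by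
    have e2 : (fun q => 2*(u q)^2 - pdx (pdx u) q) = fun q => 2*(u q * u q) - pdx (pdx u) q := by
      ext q; ring
    rw [e2, fderiv_fun_sub (f := fun q => 2 * (u q * u q)) (((du p).mul (du p)).const_mul 2) (du2 p)]
    rw [fderiv_const_mul (a := fun q => u q * u q) ((du p).mul (du p)) 2, fderiv_fun_mul (du p) (du p)]
    simp only [ContinuousLinearMap.sub_apply, ContinuousLinearMap.smul_apply,
      ContinuousLinearMap.add_apply, smul_eq_mul]
    show 2 * (u p * fderiv ℝ u p (1,0) + u p * fderiv ℝ u p (1,0)) - _ = _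
    unfold pdx
    ring
  ext i j
  show pdx (fun p' => Vmat u k p' i j) p = _
  have e1 : (fun p' => Vmat u k p' i j)
      = fun p' => ((u p' : ℝ) : ℂ) * (-2*k * ((!![(0:ℂ),1;1,0] : Matrix (Fin 2) (Fin 2) ℂ) i j))
        + ((pdx u p' : ℝ) : ℂ) * ((!![(0:ℂ),-I;I,0] : Matrix (Fin 2) (Fin 2) ℂ) i j)
        + (((2*(u p')^2 - pdx (pdx u) p' : ℝ) : ℂ)) *
            ((!![I,-1;-1,-I] : Matrix (Fin 2) (Fin 2) ℂ) i j / (2*k)) := by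
    ext p'
    simp only [Vmat, Matrix.add_apply, Matrix.smul_apply, smul_eq_mul]
    push_cast
    ring
  rw [e1, pdx_def,
    fderiv_entry3 (f := u) (g := pdx u) (h := fun q => 2*(u q)^2 - pdx (pdx u) q)
      (du p) (du1 p) (dh p) _ _ _ _, hder]
  simp only [Matrix.add_apply, Matrix.smul_apply, smul_eq_mul, ← pdx_def]
  push_cast
  ring

open Complex in
private lemma curv_eq (u : ℝ × ℝ → ℝ) (hu : ContDiff ℝ (⊤ : ℕ∞) u) (p : ℝ × ℝ) (k : ℂ) (hk : k ≠ 0) :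
    matPdt (fun p' => Umat u k p') p - matPdx (fun p' => Vmat u k p') p
      + ((Lmat k + Umat u k p) * (Zmat k + Vmat u k p)
          - (Zmat k + Vmat u k p) * (Lmat k + Umat u k p))
    = ((((pdt u p : ℝ) : ℂ) + ((pdx (pdx (pdx u)) p : ℝ) : ℂ)
        - 6*((u p : ℝ) : ℂ)*((pdx u p : ℝ) : ℂ))/(2*k)) • !![I,-1;-1,-I] := by
  rw [matPdt_Umat u hu k p, matPdx_Vmat u hu k p]
  simp only [Lmat, Zmat, Umat, Vmat, σ₃]
  exact zc_key _ _ _ _ _ _ hk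

/-- `u` satisfies the KdV equation `u_t + u_xxx - 6uu_x = 0` on ℝ² if and only
if the zero-curvature equation `∂_t 𝒰 - ∂_x 𝒱 + [L(k) + 𝒰, Z(k) + 𝒱] = 0` holds
for all `(x,t) ∈ ℝ²` and all `k ∈ ℂ \ {0}`. -/
theorem zero_curvature_KdV (u : ℝ × ℝ → ℝ) (hu : ContDiff ℝ (⊤ : ℕ∞) u) :
    (∀ p : ℝ × ℝ, pdt u p + pdx (pdx (pdx u)) p - 6 * u p * pdx u p = 0)
    ↔
    (∀ p : ℝ × ℝ, ∀ k : ℂ, k ≠ 0 →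
      matPdt (fun p' => Umat u k p') p - matPdx (fun p' => Vmat u k p') p
        + ((Lmat k + Umat u k p) * (Zmat k + Vmat u k p)
            - (Zmat k + Vmat u k p) * (Lmat k + Umat u k p)) = 0) := by
  constructor
  · intro hkdv p k hk
    rw [curv_eq u hu p k hk]
    have h0' : ((pdt u p + pdx (pdx (pdx u)) p - 6 * u p * pdx u p : ℝ) : ℂ) = 0 := by
      exact_mod_cast congrArg (fun x : ℝ => (x : ℂ)) (hkdv p)
    have h0 : (((pdt u p : ℝ) : ℂ) + ((pdx (pdx (pdx u)) p : ℝ) : ℂ)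
        - 6*((u p : ℝ) : ℂ)*((pdx u p : ℝ) : ℂ)) = 0 := by
      rw [← h0']; push_cast; ring
    rw [h0, zero_div, zero_smul]
  · intro hzc p
    have h := hzc p 1 one_ne_zero
    rw [curv_eq u hu p 1 one_ne_zero] at h
    have h00 : ((((pdt u p : ℝ) : ℂ) + ((pdx (pdx (pdx u)) p : ℝ) : ℂ)
        - 6*((u p : ℝ) : ℂ)*((pdx u p : ℝ) : ℂ))/(2*1)) * Complex.I = 0 := by
      have := congrFun (congrFun (congrArg (fun M => M) h) 0) 0
      simpa [Matrix.smul_apply, smul_eq_mul] using this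
    have h1 : (((pdt u p : ℝ) : ℂ) + ((pdx (pdx (pdx u)) p : ℝ) : ℂ)
        - 6*((u p : ℝ) : ℂ)*((pdx u p : ℝ) : ℂ)) = 0 := by
      field_simp at h00
      rw [mul_zero] at h00
      rcases mul_eq_zero.mp h00 with h | h
      · exact h
      · exact absurd h Complex.I_ne_zero
    have h2 : ((pdt u p + pdx (pdx (pdx u)) p - 6 * u p * pdx u p : ℝ) : ℂ) = 0 := by
      push_cast
      linear_combination h1
    exact_mod_cast h2
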